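/- Let μ and ν be finite Borel measures on ℝ^d that are mutually absolutely continuous on a Borel set E, with ν|_E = h·μ|_E for a density h with 0 < h < ∞ μ-a.e. on E. Then for μ-almost every ξ ∈ E and every a > 1, the limit as r → 0 of [μ(B(ξ,ar))/μ(B(ξ,r))] · [ν(B(ξ,r))/ν(B(ξ,ar))] equals 1. -/

import Mathlib

/-!
Besicovitch differentiation gives `ν (closedBall ξ r) / μ (closedBall ξ r) → dν/dμ (ξ)` as `r → 0⁺`
for `μ`-a.e. `ξ`; since `μ (ball ξ r)` is the left limit of `μ (closedBall ξ s)` at `s = r`, the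
same holds for open balls. As `μ|E ≪ ν`, the derivative `L = dν/dμ (ξ)` is positive (and it is
finite) for `μ`-a.e. `ξ ∈ E`. The doubling quotient is the ratio of the quotients `ν/μ` at radii
`r` and `a r`, which both tend to `L ∈ (0, ∞)`, so it tends to `1`.
-/

open MeasureTheory Metric Filter Set Topology
open scoped ENNReal

lemma tendsto_nhdsGT_of_tendsto_nhdsLT {β α : Type*} [LinearOrder β] [TopologicalSpace β]
    [OrderTopology β] [DenselyOrdered β] [NoMaxOrder β] [TopologicalSpace α] [RegularSpace α]
    {F G : β → α} {a : β} {L : α} (hF : Tendsto F (𝓝[>] a) (𝓝 L))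
    (hG : ∀ᶠ r in 𝓝[>] a, Tendsto F (𝓝[<] r) (𝓝 (G r))) :
    Tendsto G (𝓝[>] a) (𝓝 L) := by
  refine (closed_nhds_basis L).tendsto_right_iff.2 fun V ⟨hVL, hV⟩ => ?_
  obtain ⟨r₀, hr₀, hFV⟩ := mem_nhdsGT_iff_exists_Ioo_subset.1 (hF hVL)
  filter_upwards [hG, Ioo_mem_nhdsGT hr₀] with r hr hrr₀
  have := nhdsLT_neBot_of_exists_lt ⟨a, hrr₀.1⟩
  refine hV.mem_of_tendsto hr ?_
  filter_upwards [Ioo_mem_nhdsLT hrr₀.1] with s hs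
  exact hFV ⟨hs.1, hs.2.trans hrr₀.2⟩

section BallsAndClosedBalls

variable {X : Type*} [PseudoMetricSpace X]

lemma Metric.ball_eq_iUnion_closedBall_Iio (x : X) (r : ℝ) :
    ball x r = ⋃ s : Iio r, closedBall x s := by
  ext y
  simp only [mem_ball, mem_iUnion, mem_closedBall, Subtype.exists, mem_Iio, exists_prop]
  constructor
  · intro hy
    obtain ⟨s, hys, hsr⟩ := exists_between hy
    exact ⟨s, hsr, hys.le⟩
  · rintro ⟨s, hsr, hys⟩
    exact hys.trans_lt hsr

variable [MeasurableSpace X]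

lemma tendsto_measure_closedBall_nhdsLT (μ : Measure X) (x : X) (r : ℝ) :
    Tendsto (fun s => μ (closedBall x s)) (𝓝[<] r) (𝓝 (μ (ball x r))) := by
  rw [ball_eq_iUnion_closedBall_Iio, ← tendsto_comp_coe_Iio_atTop]
  exact tendsto_measure_iUnion_atTop fun s t hst => closedBall_subset_closedBall hst

lemma tendsto_measure_ball_div_of_closedBall {μ ν : Measure X} [IsFiniteMeasure μ] {x : X}
    {L : ℝ≥0∞} (hL : L ≠ 0)
    (h : Tendsto (fun r => ν (closedBall x r) / μ (closedBall x r)) (𝓝[>] 0) (𝓝 L)) :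
    Tendsto (fun r => ν (ball x r) / μ (ball x r)) (𝓝[>] 0) (𝓝 L) := by
  refine tendsto_nhdsGT_of_tendsto_nhdsLT h ?_
  obtain ⟨r₀, hr₀, hν⟩ := mem_nhdsGT_iff_exists_Ioo_subset.1 (h.eventually_ne hL)
  filter_upwards [Ioo_mem_nhdsGT hr₀] with r hr
  -- rules out the `0 / 0` case of `ENNReal.Tendsto.div`
  have hνr : ν (ball x r) ≠ 0 := by
    have hr2 : r / 2 ∈ Ioo 0 r₀ := ⟨half_pos hr.1, (half_lt_self hr.1).trans hr.2⟩
    refine fun h0 => (ENNReal.div_ne_zero.1 (hν hr2)).1 (measure_mono_null ?_ h0)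
    exact closedBall_subset_ball (half_lt_self hr.1)
  exact ENNReal.Tendsto.div (tendsto_measure_closedBall_nhdsLT ν x r) (Or.inl hνr)
    (tendsto_measure_closedBall_nhdsLT μ x r) (Or.inl (measure_ne_top μ _))

end BallsAndClosedBalls

lemma MeasureTheory.Measure.absolutelyContinuous_withDensity_rnDeriv_of_ac {α : Type*}
    {_ : MeasurableSpace α} {ρ μ ν : Measure α} [ν.HaveLebesgueDecomposition μ]
    (hρμ : ρ ≪ μ) (hρν : ρ ≪ ν) : ρ ≪ μ.withDensity (ν.rnDeriv μ) := by
  rw [ν.haveLebesgueDecomposition_add μ] at hρν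
  refine Measure.AbsolutelyContinuous.mk fun s _ hs => ?_
  obtain ⟨t, -, hνt, hμt⟩ := ν.mutuallySingular_singularPart μ
  rw [← inter_union_compl s t]
  refine measure_union_null (hρν ?_) (hρμ (measure_mono_null inter_subset_right hμt))
  simp only [Measure.coe_add, Pi.add_apply, add_eq_zero]
  exact ⟨measure_mono_null inter_subset_right hνt, measure_mono_null inter_subset_left hs⟩

lemma MeasureTheory.Measure.ae_rnDeriv_pos_of_ac {α : Type*} {_ : MeasurableSpace α}
    {ρ μ ν : Measure α} [SFinite ν] [SigmaFinite μ] (hρμ : ρ ≪ μ) (hρν : ρ ≪ ν) :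
    ∀ᵐ x ∂ρ, 0 < ν.rnDeriv μ x := by
  refine (absolutelyContinuous_withDensity_rnDeriv_of_ac hρμ hρν).ae_le ?_
  exact (ae_withDensity_iff (ν.measurable_rnDeriv μ)).2
    (ae_of_all _ fun x hx => pos_iff_ne_zero.2 hx)

lemma ENNReal.tendsto_div_mul_div_of_tendsto_div {α : Type*} {l : Filter α}
    {m n m' n' : α → ℝ≥0∞} {L : ℝ≥0∞} (hL0 : L ≠ 0) (hL : L ≠ ∞)
    (h : Tendsto (fun r => n r / m r) l (𝓝 L)) (h' : Tendsto (fun r => n' r / m' r) l (𝓝 L)) :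
    Tendsto (fun r => (m' r / m r) * (n r / n' r)) l (𝓝 1) := by
  have h'inv : Tendsto (fun r => m' r / n' r) l (𝓝 L⁻¹) := by
    refine h'.inv.congr' ?_
    filter_upwards [h'.eventually_ne hL0] with r hr
    obtain ⟨hn', hm'⟩ := ENNReal.div_ne_zero.1 hr
    exact ENNReal.inv_div (Or.inl hm') (Or.inr hn')
  have hprod := ENNReal.Tendsto.mul h'inv (Or.inl (ENNReal.inv_ne_zero.2 hL)) h (Or.inl hL0)
  rw [ENNReal.inv_mul_cancel hL0 hL] at hprod
  refine hprod.congr fun r => ?_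
  simp only [div_eq_mul_inv]
  ring

theorem doubling_ratio_limit_one_general (d : ℕ) (μ ν : Measure (EuclideanSpace ℝ (Fin d)))
    [IsFiniteMeasure μ] [IsFiniteMeasure ν]
    (E : Set (EuclideanSpace ℝ (Fin d)))
    (habs : μ.restrict E ≪ ν.restrict E ∧ ν.restrict E ≪ μ.restrict E) :
    ∀ᵐ ξ ∂(μ.restrict E), ∀ a : ℝ, 1 < a →
      Tendsto (fun r : ℝ =>
          (μ (ball ξ (a * r)) / μ (ball ξ r)) * (ν (ball ξ r) / ν (ball ξ (a * r))))
        (nhdsWithin 0 (Set.Ioi 0)) (nhds 1) := by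
  have hμE : μ.restrict E ≪ μ := Measure.restrict_le_self.absolutelyContinuous
  have hνE : ν.restrict E ≪ ν := Measure.restrict_le_self.absolutelyContinuous
  filter_upwards [ae_restrict_of_ae (Besicovitch.ae_tendsto_rnDeriv ν μ),
    ae_restrict_of_ae (ν.rnDeriv_lt_top μ), Measure.ae_rnDeriv_pos_of_ac hμE (habs.1.trans hνE)]
    with ξ hlim hfin hpos a ha
  have hball := tendsto_measure_ball_div_of_closedBall hpos.ne' hlim
  have hscale : Tendsto (a * ·) (𝓝[>] (0 : ℝ)) (𝓝[>] 0) :=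
    tendsto_iff_comap.2 (comap_mulLeft_nhdsGT_zero (zero_lt_one.trans ha)).ge
  exact ENNReal.tendsto_div_mul_div_of_tendsto_div hpos.ne' hfin.ne hball (hball.comp hscale)

theorem doubling_ratio_limit_one (d : ℕ) (μ ν : Measure (EuclideanSpace ℝ (Fin d)))
    [IsFiniteMeasure μ] [IsFiniteMeasure ν]
    (E : Set (EuclideanSpace ℝ (Fin d))) (hE : MeasurableSet E)
    (h : EuclideanSpace ℝ (Fin d) → ℝ≥0∞)
    (hdens : ν.restrict E = (μ.restrict E).withDensity h)
    (hpos : ∀ᵐ x ∂(μ.restrict E), 0 < h x ∧ h x < ⊤)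
    (habs : μ.restrict E ≪ ν.restrict E ∧ ν.restrict E ≪ μ.restrict E) :
    ∀ᵐ ξ ∂(μ.restrict E), ∀ a : ℝ, 1 < a →
      Tendsto (fun r : ℝ =>
          (μ (ball ξ (a * r)) / μ (ball ξ r)) * (ν (ball ξ r) / ν (ball ξ (a * r))))
        (nhdsWithin 0 (Set.Ioi 0)) (nhds 1) :=
  doubling_ratio_limit_one_general d μ ν E habs
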